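/- Let H be a d-mixing hypothesis class over X and suppose P₁, ..., P_m is a partition of H into nonempty parts, each of size at least L. Then the number of examples x ∈ X such that for some part P_j, the set {h ∈ P_j : h(x)=1} has size outside [(1/2-ε)|P_j|, (1/2+ε)|P_j|] is at most 2m·d²/(L·ε²). In particular, if |X| > 2m·d²/(L·ε²), there is an example x that ε-balances every part simultaneously. -/
import Mathlib


open Finset Real

/-- Number of edges between `T ⊆ A` and `S ⊆ B` in the bipartite graph with
edge relation `E`. -/
def eCount {A B : Type*} (E : A → B → Bool) (T : Finset A) (S : Finset B) : ℕ :=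
  ((T ×ˢ S).filter fun p => E p.1 p.2 = true).card

/-- A bipartite graph on parts `A`, `B` with edge relation `E` is `d`-mixing if for
all `T ⊆ A`, `S ⊆ B`, `|e(S,T) - |S||T|/2| ≤ d √(|S||T|)`. -/
def IsMixing {A B : Type*} [Fintype A] [Fintype B] (E : A → B → Bool) (d : ℝ) : Prop :=
  ∀ (T : Finset A) (S : Finset B),
    |(eCount E T S : ℝ) - T.card * S.card / 2| ≤ d * Real.sqrt (T.card * S.card)

lemma eCount_eq_sum {A B : Type*} (E : A → B → Bool) (T : Finset A) (S : Finset B) :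
    eCount E T S = ∑ x ∈ S, (T.filter fun h => E h x = true).card := by
  classical
  unfold eCount
  rw [Finset.card_eq_sum_card_fiberwise (f := Prod.snd) (t := S)
    (fun p hp => (Finset.mem_product.mp (Finset.mem_filter.mp hp).1).2)]
  refine Finset.sum_congr rfl fun x hx => ?_
  have hset : ((T ×ˢ S).filter fun p => E p.1 p.2 = true).filter (fun p => p.2 = x)
      = (T.filter fun h => E h x = true) ×ˢ {x} := by
    ext p
    simp only [Finset.mem_filter, Finset.mem_product, Finset.mem_singleton]
    constructor
    · rintro ⟨⟨⟨h1, h2⟩, h3⟩, h4⟩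
      subst h4; exact ⟨⟨h1, h3⟩, rfl⟩
    · rintro ⟨⟨h1, h3⟩, h4⟩
      subst h4; exact ⟨⟨⟨h1, hx⟩, h3⟩, rfl⟩
  rw [hset]
  simp

lemma key_bound (d ε c s : ℝ) (hε : 0 < ε) (hc : 0 < c) (hs : 0 ≤ s)
    (h : ε * (c * s) ≤ d * Real.sqrt (c * s)) : s ≤ d ^ 2 / (ε ^ 2 * c) := by
  rcases eq_or_lt_of_le hs with h0 | h0
  · rw [← h0]; positivity
  · have hcs : 0 < c * s := mul_pos hc h0
    have ht : 0 < Real.sqrt (c * s) := Real.sqrt_pos.mpr hcs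
    have ht2 : Real.sqrt (c * s) ^ 2 = c * s := Real.sq_sqrt hcs.le
    have h1 : ε * Real.sqrt (c * s) ≤ d := by nlinarith [ht]
    have h2 : ε ^ 2 * (c * s) ≤ d ^ 2 := by nlinarith [mul_pos hε ht]
    rw [le_div_iff₀ (by positivity : (0:ℝ) < ε ^ 2 * c)]
    nlinarith [h2]

lemma side_card_bound {H X : Type*} [Fintype H] [Fintype X] (f : H → X → Bool) (d : ℝ)
    (hmix : IsMixing f d) (T : Finset H) (hT : 0 < T.card) (ε : ℝ) (hε : 0 < ε)
    (S : Finset X)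
    (h : ε * ((T.card : ℝ) * S.card) ≤ |(eCount f T S : ℝ) - T.card * S.card / 2|) :
    (S.card : ℝ) ≤ d ^ 2 / (ε ^ 2 * T.card) := by
  exact key_bound d ε _ _ hε (by exact_mod_cast hT) (by positivity)
    (h.trans (hmix T S))

open scoped Classical in
theorem balanced_example_for_partition
    {H X : Type*} [Fintype H] [Fintype X] (f : H → X → Bool) (d : ℝ)
    (hmix : IsMixing f d) (m : ℕ) (P : Fin m → Finset H)
    (hdisj : ∀ i j, i ≠ j → Disjoint (P i) (P j))
    (hcover : Finset.univ.biUnion P = (Finset.univ : Finset H))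
    (L : ℕ) (hL : 0 < L) (hsize : ∀ j, L ≤ (P j).card)
    (ε : ℝ) (hε : 0 < ε) :
    ((Finset.univ.filter fun x : X => ∃ j,
        ¬((1/2 - ε) * (P j).card ≤ (((P j).filter fun h => f h x = true).card : ℝ) ∧
          (((P j).filter fun h => f h x = true).card : ℝ) ≤ (1/2 + ε) * (P j).card)).card : ℝ)
      ≤ 2 * m * d ^ 2 / (L * ε ^ 2) ∧
    (2 * m * d ^ 2 / (L * ε ^ 2) < (Fintype.card X : ℝ) →
      ∃ x : X, ∀ j,
        (1/2 - ε) * (P j).card ≤ (((P j).filter fun h => f h x = true).card : ℝ) ∧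
        (((P j).filter fun h => f h x = true).card : ℝ) ≤ (1/2 + ε) * (P j).card) := by
  set cnt : X → Fin m → ℕ := fun x j => ((P j).filter fun h => f h x = true).card with hcnt
  set bad : Finset X := Finset.univ.filter fun x : X => ∃ j,
      ¬((1/2 - ε) * (P j).card ≤ ((cnt x j : ℕ) : ℝ) ∧
        ((cnt x j : ℕ) : ℝ) ≤ (1/2 + ε) * (P j).card) with hbad
  set hi : Fin m → Finset X := fun j =>
      Finset.univ.filter fun x => (1/2 + ε) * (P j).card < ((cnt x j : ℕ) : ℝ) with hhi
  set lo : Fin m → Finset X := fun j =>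
      Finset.univ.filter fun x => ((cnt x j : ℕ) : ℝ) < (1/2 - ε) * (P j).card with hlo
  have hPpos : ∀ j, 0 < (P j).card := fun j => lt_of_lt_of_le hL (hsize j)
  have hLpos : (0:ℝ) < L := by exact_mod_cast hL
  -- eCount over a set S equals the sum of counts
  have hsum : ∀ (j : Fin m) (S : Finset X),
      (eCount f (P j) S : ℝ) = ∑ x ∈ S, ((cnt x j : ℕ) : ℝ) := by
    intro j S
    rw [eCount_eq_sum]
    push_cast
    rfl
  have hhibound : ∀ j, ((hi j).card : ℝ) ≤ d ^ 2 / (ε ^ 2 * L) := by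
    intro j
    have hb : ((hi j).card : ℝ) ≤ d ^ 2 / (ε ^ 2 * (P j).card) := by
      apply side_card_bound f d hmix (P j) (hPpos j) ε hε
      have hlow : (1/2 + ε) * (P j).card * (hi j).card ≤ (eCount f (P j) (hi j) : ℝ) := by
        rw [hsum]
        calc (1/2 + ε) * (P j).card * (hi j).card
            = ∑ _x ∈ hi j, (1/2 + ε) * ((P j).card : ℝ) := by
              rw [Finset.sum_const, nsmul_eq_mul]; ring
          _ ≤ ∑ x ∈ hi j, ((cnt x j : ℕ) : ℝ) := by
              apply Finset.sum_le_sum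
              intro x hx
              exact (le_of_lt (Finset.mem_filter.mp hx).2)
      refine le_trans ?_ (le_abs_self _)
      nlinarith [hlow, (Nat.cast_nonneg (hi j).card : (0:ℝ) ≤ _), (Nat.cast_nonneg (P j).card : (0:ℝ) ≤ _)]
    refine hb.trans (div_le_div_of_nonneg_left (by positivity) (by positivity) ?_)
    have hLP : (L:ℝ) ≤ (P j).card := by exact_mod_cast hsize j
    exact mul_le_mul_of_nonneg_left hLP (by positivity)
  have hlobound : ∀ j, ((lo j).card : ℝ) ≤ d ^ 2 / (ε ^ 2 * L) := by
    intro j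
    have hb : ((lo j).card : ℝ) ≤ d ^ 2 / (ε ^ 2 * (P j).card) := by
      apply side_card_bound f d hmix (P j) (hPpos j) ε hε
      have hup : (eCount f (P j) (lo j) : ℝ) ≤ (1/2 - ε) * (P j).card * (lo j).card := by
        rw [hsum]
        calc ∑ x ∈ lo j, ((cnt x j : ℕ) : ℝ)
            ≤ ∑ _x ∈ lo j, (1/2 - ε) * ((P j).card : ℝ) := by
              apply Finset.sum_le_sum
              intro x hx
              exact (le_of_lt (Finset.mem_filter.mp hx).2)
          _ = (1/2 - ε) * (P j).card * (lo j).card := by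
              rw [Finset.sum_const, nsmul_eq_mul]; ring
      refine le_trans ?_ (neg_le_abs _)
      nlinarith [hup, (Nat.cast_nonneg (lo j).card : (0:ℝ) ≤ _), (Nat.cast_nonneg (P j).card : (0:ℝ) ≤ _)]
    refine hb.trans (div_le_div_of_nonneg_left (by positivity) (by positivity) ?_)
    have hLP : (L:ℝ) ≤ (P j).card := by exact_mod_cast hsize j
    exact mul_le_mul_of_nonneg_left hLP (by positivity)
  have hsub : bad ⊆ Finset.univ.biUnion (fun j => hi j ∪ lo j) := by
    intro x hx
    rw [hbad, Finset.mem_filter] at hx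
    obtain ⟨-, j, hj⟩ := hx
    rw [Finset.mem_biUnion]
    refine ⟨j, Finset.mem_univ j, ?_⟩
    rw [Finset.mem_union]
    rw [not_and_or, not_le, not_le] at hj
    rcases hj with hj | hj
    · exact Or.inr (Finset.mem_filter.mpr ⟨Finset.mem_univ x, hj⟩)
    · exact Or.inl (Finset.mem_filter.mpr ⟨Finset.mem_univ x, hj⟩)
  have hbadcard : (bad.card : ℝ) ≤ 2 * m * d ^ 2 / (L * ε ^ 2) := by
    have h1 : bad.card ≤ ∑ j : Fin m, ((hi j).card + (lo j).card) := by
      calc bad.card ≤ (Finset.univ.biUnion (fun j => hi j ∪ lo j)).card :=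
            Finset.card_le_card hsub
        _ ≤ ∑ j : Fin m, (hi j ∪ lo j).card := Finset.card_biUnion_le
        _ ≤ ∑ j : Fin m, ((hi j).card + (lo j).card) :=
            Finset.sum_le_sum fun j _ => Finset.card_union_le _ _
    have h2 : (bad.card : ℝ) ≤ ∑ j : Fin m, (((hi j).card : ℝ) + ((lo j).card : ℝ)) := by
      exact_mod_cast h1
    refine h2.trans ?_
    calc ∑ j : Fin m, (((hi j).card : ℝ) + ((lo j).card : ℝ))
        ≤ ∑ _j : Fin m, (d ^ 2 / (ε ^ 2 * L) + d ^ 2 / (ε ^ 2 * L)) :=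
          Finset.sum_le_sum fun j _ => add_le_add (hhibound j) (hlobound j)
      _ = 2 * m * d ^ 2 / (L * ε ^ 2) := by
          rw [Finset.sum_const, nsmul_eq_mul]
          simp only [Finset.card_univ, Fintype.card_fin]
          field_simp
          ring
  refine ⟨hbadcard, fun hlt => ?_⟩
  have hcardlt : bad.card < Fintype.card X := by
    have : (bad.card : ℝ) < (Fintype.card X : ℝ) := lt_of_le_of_lt hbadcard hlt
    exact_mod_cast this
  have : ¬ (Finset.univ : Finset X) ⊆ bad := by
    intro hcon
    have := Finset.card_le_card hcon
    rw [Finset.card_univ] at this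
    omega
  obtain ⟨x, -, hx⟩ := Finset.not_subset.mp this
  refine ⟨x, fun j => ?_⟩
  rw [hbad, Finset.mem_filter] at hx
  push_neg at hx
  exact hx (Finset.mem_univ x) j
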